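/- Let b : ℝ → ℝ be locally bounded and measurable with limsup_{x→∞} b(x)/log x = 0. Define u(x) = ∫₀ˣ exp(−∫₀ʸ 2b(z) dz) dy. Then for every c > 0 one has ∫_3^∞ exp(−∫₀ˣ 2b(y) dy) / (u(x) − u(x − c)) dx = ∞. -/

import Mathlib

/-!
With `F x = ∫₀ˣ 2b`, the denominator is `u x - u (x - c) = ∫_{x-c}^x e^{-F}`. Once
`b ≤ ε log` on the window `[x - c, x]`, `F` increases by at most `2cε log x` across it, so the
integrand is at least `x^{-2cε} / c`. Taking `ε = 1/(4c)` gives `x^{-1/2} / c`, which is not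
integrable at infinity.
-/

open Real MeasureTheory intervalIntegral Set Filter

theorem intervalIntegrable_of_measurable_of_bounded_on_compacts {f : ℝ → ℝ} (hf : Measurable f)
    (hbdd : ∀ K : Set ℝ, IsCompact K → ∃ M, ∀ x ∈ K, |f x| ≤ M) (a b : ℝ) :
    IntervalIntegrable f volume a b := by
  obtain ⟨M, hM⟩ := hbdd _ isCompact_uIcc
  refine (Measure.integrableOn_of_bounded (M := M) measure_Icc_lt_top.ne
    hf.aestronglyMeasurable ?_).intervalIntegrable
  filter_upwards [ae_restrict_mem measurableSet_uIcc] with x hx using hM x hx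

theorem lintegral_Ioi_ofReal_rpow_eq_top {s t : ℝ} (ht : 0 < t) (hs : -1 ≤ s) :
    ∫⁻ x in Ioi t, ENNReal.ofReal (x ^ s) = ⊤ := by
  by_contra h
  have hint : IntegrableOn (fun x : ℝ ↦ x ^ s) (Ioi t) :=
    (lintegral_ofReal_ne_top_iff_integrable
      (measurable_id.pow_const s).aestronglyMeasurable
      (ae_restrict_of_forall_mem measurableSet_Ioi fun x hx ↦
        rpow_nonneg (ht.trans hx).le s)).mp h
  exact (integrableOn_Ioi_rpow_iff ht).mp hint |>.not_ge hs

theorem lintegral_Ici_ofReal_eq_top_of_rpow_le {f : ℝ → ℝ} {C s : ℝ} (hC : 0 < C)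
    (hs : -1 ≤ s) (hf : ∀ᶠ x in atTop, C * x ^ s ≤ f x) (a : ℝ) :
    ∫⁻ x in Ici a, ENNReal.ofReal (f x) = ⊤ := by
  obtain ⟨A, hA⟩ := eventually_atTop.mp hf
  set t := max A (max a 1)
  have ht : 0 < t := lt_max_of_lt_right (lt_max_of_lt_right one_pos)
  refine top_le_iff.mp ?_
  calc ⊤ = ENNReal.ofReal C * ∫⁻ x in Ioi t, ENNReal.ofReal (x ^ s) := by
        rw [lintegral_Ioi_ofReal_rpow_eq_top ht hs, ENNReal.mul_top (by simpa using hC)]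
    _ = ∫⁻ x in Ioi t, ENNReal.ofReal (C * x ^ s) := by
        rw [← lintegral_const_mul _ (by fun_prop)]
        simp_rw [ENNReal.ofReal_mul hC.le]
    _ ≤ ∫⁻ x in Ioi t, ENNReal.ofReal (f x) :=
        setLIntegral_mono' measurableSet_Ioi fun x hx ↦
          ENNReal.ofReal_le_ofReal (hA x ((le_max_left _ _).trans hx.le))
    _ ≤ ∫⁻ x in Ici a, ENNReal.ofReal (f x) :=
        lintegral_mono_set (Ioi_subset_Ici ((le_max_left _ _).trans (le_max_right _ _)))

theorem eventually_forall_Icc_le_mul_log {b : ℝ → ℝ}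
    (hb : limsup (fun x : ℝ ↦ ((b x / log x : ℝ) : EReal)) atTop ≤ 0)
    {ε : ℝ} (hε : 0 < ε) (c : ℝ) :
    ∀ᶠ x in atTop, ∀ z ∈ Icc (x - c) x, b z ≤ ε * log x := by
  have hlt : ∀ᶠ z in atTop, ((b z / log z : ℝ) : EReal) < ε :=
    eventually_lt_of_limsup_lt (hb.trans_lt (EReal.coe_pos.mpr hε))
  obtain ⟨z₀, hz₀⟩ := eventually_atTop.mp (hlt.and (eventually_gt_atTop 1))
  filter_upwards [eventually_ge_atTop (z₀ + c)] with x hx z ⟨hzl, hzr⟩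
  obtain ⟨hbz, hz1⟩ := hz₀ z (by linarith)
  have hlogz : 0 < log z := log_pos hz1
  calc b z ≤ ε * log z := ((div_lt_iff₀ hlogz).mp (EReal.coe_lt_coe_iff.mp hbz)).le
    _ ≤ ε * log x := by gcongr

section PrimitiveExp

variable {g : ℝ → ℝ}

theorem continuous_exp_neg_primitive (hg : ∀ a b, IntervalIntegrable g volume a b) :
    Continuous fun y ↦ exp (-∫ z in (0:ℝ)..y, g z) :=
  (continuous_primitive hg 0).neg.rexp

theorem integral_exp_neg_primitive_le (hg : ∀ a b, IntervalIntegrable g volume a b)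
    {a x K : ℝ} (hax : a ≤ x) (hK : 0 ≤ K) (hgK : ∀ z ∈ Icc a x, g z ≤ K) :
    ∫ y in a..x, exp (-∫ z in (0:ℝ)..y, g z)
      ≤ (x - a) * exp (-(∫ z in (0:ℝ)..x, g z) + (x - a) * K) := by
  have hpoint : ∀ y ∈ Icc a x,
      exp (-∫ z in (0:ℝ)..y, g z) ≤ exp (-(∫ z in (0:ℝ)..x, g z) + (x - a) * K) := by
    rintro y ⟨hay, hyx⟩
    have hsplit := integral_add_adjacent_intervals (hg 0 y) (hg y x)
    have htail : ∫ z in y..x, g z ≤ (x - y) * K := by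
      simpa using integral_mono_on hyx (hg y x) intervalIntegrable_const
        fun z hz ↦ hgK z ⟨hay.trans hz.1, hz.2⟩
    have hwindow : (x - y) * K ≤ (x - a) * K := by gcongr
    exact exp_le_exp.mpr (by linarith)
  simpa using integral_mono_on hax
    ((continuous_exp_neg_primitive hg).intervalIntegrable (μ := volume) a x)
    intervalIntegrable_const hpoint

theorem inv_mul_exp_neg_le_exp_neg_primitive_div (hg : ∀ a b, IntervalIntegrable g volume a b)
    {x c K : ℝ} (hc : 0 < c) (hK : 0 ≤ K) (hgK : ∀ z ∈ Icc (x - c) x, g z ≤ K) :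
    c⁻¹ * exp (-(c * K))
      ≤ exp (-∫ z in (0:ℝ)..x, g z) / ∫ y in (x - c)..x, exp (-∫ z in (0:ℝ)..y, g z) := by
  have hpos : 0 < ∫ y in (x - c)..x, exp (-∫ z in (0:ℝ)..y, g z) :=
    intervalIntegral_pos_of_pos
      ((continuous_exp_neg_primitive hg).intervalIntegrable (μ := volume) _ _)
      (fun _ ↦ exp_pos _) (by linarith)
  have hle := integral_exp_neg_primitive_le hg (by linarith) hK hgK
  rw [sub_sub_cancel] at hle
  rw [le_div_iff₀ hpos]
  calc c⁻¹ * exp (-(c * K)) * ∫ y in (x - c)..x, exp (-∫ z in (0:ℝ)..y, g z)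
      ≤ c⁻¹ * exp (-(c * K)) * (c * exp (-(∫ z in (0:ℝ)..x, g z) + c * K)) := by gcongr
    _ = exp (-∫ z in (0:ℝ)..x, g z) := by
        rw [exp_add]; field_simp; rw [← exp_add]; simp

end PrimitiveExp

/-- Theorem 2(iv), analytic content: if `limsup_{x→∞} b(x)/log x = 0`, then the
down-crossing criterion integral diverges for every `c > 0`. -/
theorem criterion_infinite_of_sublog_drift
    (b : ℝ → ℝ) (hb_meas : Measurable b)
    (hb_loc : ∀ K : Set ℝ, IsCompact K → ∃ M, ∀ x ∈ K, |b x| ≤ M)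
    (hlimsup : limsup (fun x : ℝ => ((b x / Real.log x : ℝ) : EReal)) atTop = 0)
    (u : ℝ → ℝ)
    (hu : ∀ x, u x = ∫ y in (0:ℝ)..x, Real.exp (-∫ z in (0:ℝ)..y, 2 * b z)) :
    ∀ c : ℝ, 0 < c →
      ∫⁻ x in Ici (3:ℝ),
        ENNReal.ofReal
          (Real.exp (-∫ y in (0:ℝ)..x, 2 * b y) / (u x - u (x - c))) = ⊤ := by
  intro c hc
  have h2b : ∀ a d, IntervalIntegrable (fun z ↦ 2 * b z) volume a d := fun a d ↦
    (intervalIntegrable_of_measurable_of_bounded_on_compacts hb_meas hb_loc a d).const_mul 2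
  have hw := (continuous_exp_neg_primitive h2b).intervalIntegrable (μ := volume)
  refine lintegral_Ici_ofReal_eq_top_of_rpow_le (inv_pos.mpr hc) (s := -2⁻¹) (by norm_num) ?_ 3
  filter_upwards [eventually_forall_Icc_le_mul_log hlimsup.le (by positivity : 0 < (4 * c)⁻¹) c,
    eventually_ge_atTop 1] with x hbx hx1
  have hlog : 0 ≤ log x := log_nonneg hx1
  have hexp : exp (-(c * (2 * ((4 * c)⁻¹ * log x)))) = x ^ (-2⁻¹ : ℝ) := by
    rw [rpow_def_of_pos (by linarith)]
    congr 1
    field_simp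
    ring
  rw [hu, hu, integral_interval_sub_left (hw 0 x) (hw 0 (x - c)), ← hexp]
  exact inv_mul_exp_neg_le_exp_neg_primitive_div h2b hc (by positivity)
    fun z hz ↦ by linarith [hbx z hz]
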